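/- arXiv:2004.14127 — 6 statements merged into one kernel-verified Lean document; each statement's English description precedes it below -/
import Mathlib

section
/- Let (P, ≤, ') be a poset with antitone involution. Adjoin four new elements 0 = c₁ < c₂ < c₃ < c₄ = 1 with c₂ < x < c₃ for all x ∈ P, extend ' by cᵢ' := c₅₋ᵢ, and define on E(P) = P ∪ {c₁,...,c₄}: 0 ⊙ x = x ⊙ 0 = 0, 1 ⊙ x = x ⊙ 1 = x, 0 → x = x → 1 = 1, x → 0 = x', 1 → x = x; and for x, y ∉ {0,1}: x ⊙ y = 0 if x ≤ y' else c₂, and x → y = 1 if x ≤ y else c₃. Then (E(P), ≤, ⊙, →, 1) is a residuated poset satisfying x → 0 = x' for all x ∈ E(P). -/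
attribute [local instance] Classical.propDecidable

/-- The extension E(P) = P ∪ {c₁, c₂, c₃, c₄} of a poset P: `base x` is an
element of P, and `ext i` (i : Fin 4) is the element cᵢ₊₁, so `ext 0` = c₁ = 0
and `ext 3` = c₄ = 1. -/
inductive EP (P : Type*) where
  | base : P → EP P
  | ext : Fin 4 → EP P

namespace EP

variable {P : Type*} [PartialOrder P]

/-- The order on E(P): 0 = c₁ < c₂ < x < c₃ < c₄ = 1 for all x ∈ P. -/
def le : EP P → EP P → Prop
  | base x, base y => x ≤ y
  | base _, ext i => 2 ≤ i.val
  | ext i, base _ => i.val ≤ 1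
  | ext i, ext j => i ≤ j

instance : PartialOrder (EP P) where
  le := le
  le_refl x := by cases x <;> simp [le]
  le_trans x y z := by
    cases x <;> cases y <;> cases z <;>
      simp only [le, Fin.le_def] <;> intros <;>
      first
        | omega
        | (apply le_trans <;> assumption)
        | trivial
  le_antisymm x y := by
    cases x <;> cases y <;>
      simp only [le, Fin.le_def] <;> intros <;>
      first
        | (congr 1; apply le_antisymm <;> assumption)
        | (congr 1; omega)
        | omega

/-- The extension of the antitone involution ' of P to E(P), with cᵢ' = c₅₋ᵢ. -/
def inv (f : P → P) : EP P → EP P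
  | base x => base (f x)
  | ext i => ext ⟨3 - i.val, by omega⟩

/-- The monoid operation ⊙ on E(P). -/
noncomputable def mul (f : P → P) (x y : EP P) : EP P :=
  if x = ext 0 ∨ y = ext 0 then ext 0
  else if x = ext 3 then y
  else if y = ext 3 then x
  else if le x (inv f y) then ext 0 else ext 1

/-- The residuum → on E(P). -/
noncomputable def imp (f : P → P) (x y : EP P) : EP P :=
  if x = ext 0 ∨ y = ext 3 then ext 3
  else if y = ext 0 then inv f x
  else if x = ext 3 then y
  else if le x y then ext 3 else ext 2

end EP

namespace EP

variable {P : Type*} [PartialOrder P]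

lemma le_def {x y : EP P} : x ≤ y ↔ le x y := Iff.rfl

lemma v0 : ((0 : Fin 4) : ℕ) = 0 := rfl
lemma v1 : ((1 : Fin 4) : ℕ) = 1 := rfl
lemma v2 : ((2 : Fin 4) : ℕ) = 2 := rfl
lemma v3 : ((3 : Fin 4) : ℕ) = 3 := rfl

lemma bot_le' (x : EP P) : (ext 0 : EP P) ≤ x := by
  cases x <;> simp [le_def, le]

lemma le_top' (x : EP P) : x ≤ (ext 3 : EP P) := by
  cases x with
  | base a => simp [le_def, le, v3]
  | ext i => simp only [le_def, le, Fin.le_def, v3]; have := i.isLt; omega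

lemma le_bot_iff' {x : EP P} : x ≤ (ext 0 : EP P) ↔ x = ext 0 := by
  cases x with
  | base a => simp [le_def, le, v0]
  | ext i => simp only [le_def, le, Fin.le_def, ext.injEq, Fin.ext_iff, v0]; omega

lemma ext1_le {x : EP P} (h : x ≠ ext 0) : (ext 1 : EP P) ≤ x := by
  cases x with
  | base a => simp [le_def, le]
  | ext i =>
    simp only [ne_eq, ext.injEq, Fin.ext_iff, v0, v3] at h
    simp only [le_def, le, Fin.le_def, v0, v1, v2, v3]; omega

lemma le_ext2 {x : EP P} (h : x ≠ ext 3) : x ≤ (ext 2 : EP P) := by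
  cases x with
  | base a => simp [le_def, le]
  | ext i =>
    simp only [ne_eq, ext.injEq, Fin.ext_iff, v0, v3] at h
    simp only [le_def, le, Fin.le_def, v0, v1, v2, v3]
    have := i.isLt; omega

lemma flip (f : P → P) (hanti : ∀ x y : P, x ≤ y → f y ≤ f x)
    (hinv : ∀ x : P, f (f x) = x) {x y : EP P} :
    le x (inv f y) ↔ le y (inv f x) := by
  cases x with
  | base a =>
    cases y with
    | base b =>
      simp only [inv, le]
      constructor
      · intro h; have := hanti _ _ h; rwa [hinv] at this
      · intro h; have := hanti _ _ h; rwa [hinv] at this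
    | ext i => simp only [inv, le, v0, v1, v2, v3]; omega
  | ext i =>
    cases y with
    | base b => simp only [inv, le, v0, v1, v2, v3]; omega
    | ext j => simp only [inv, le, Fin.le_def, v0, v1, v2, v3]; omega

lemma mul_zero' (f : P → P) (y : EP P) : mul f (ext 0) y = ext 0 := by
  simp [mul]

lemma zero_mul' (f : P → P) (y : EP P) : mul f y (ext 0) = ext 0 := by
  simp [mul]

lemma one_mul' (f : P → P) (y : EP P) : mul f (ext 3) y = y := by
  by_cases h : y = ext 0 <;> simp [mul, h]

lemma mul_one' (f : P → P) (y : EP P) : mul f y (ext 3) = y := by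
  by_cases h : y = ext 0
  · simp [mul, h]
  · have h3 : (ext 3 : EP P) ≠ ext 0 := by simp [Fin.ext_iff, v0, v1, v2, v3]
    by_cases h2 : y = ext 3 <;> simp [mul, h, h2, h3]

lemma ne30 : (ext 3 : EP P) ≠ ext 0 := by simp [Fin.ext_iff, v0, v1, v2, v3]

lemma mul_mid (f : P → P) {x y : EP P} (hx0 : x ≠ ext 0) (hx3 : x ≠ ext 3)
    (hy0 : y ≠ ext 0) (hy3 : y ≠ ext 3) :
    mul f x y = if le x (inv f y) then ext 0 else ext 1 := by
  simp [mul, hx0, hx3, hy0, hy3]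

lemma le1_inv (f : P → P) {z : EP P} (hz3 : z ≠ ext 3) :
    le (ext 1 : EP P) (inv f z) := by
  cases z with
  | base a => simp [inv, le, v1]
  | ext i =>
    simp only [ne_eq, ext.injEq, Fin.ext_iff, v3] at hz3
    simp only [inv, le, Fin.le_def, v0, v1, v2, v3]
    have := i.isLt; omega

lemma not_le3_inv (f : P → P) {y : EP P} (hy0 : y ≠ ext 0) (hy3 : y ≠ ext 3) :
    ¬ le (ext 3 : EP P) (inv f y) := by
  cases y with
  | base a => simp [inv, le, v3]
  | ext i =>
    simp only [ne_eq, ext.injEq, Fin.ext_iff, v0, v3] at hy0 hy3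
    simp only [inv, le, Fin.le_def, v0, v1, v2, v3]
    omega

lemma mul_comm' (f : P → P) (hanti : ∀ x y : P, x ≤ y → f y ≤ f x)
    (hinv : ∀ x : P, f (f x) = x) (x y : EP P) : mul f x y = mul f y x := by
  by_cases hx0 : x = ext 0
  · simp [hx0, mul_zero', zero_mul']
  by_cases hy0 : y = ext 0
  · simp [hy0, mul_zero', zero_mul']
  by_cases hx3 : x = ext 3
  · simp [hx3, one_mul', mul_one']
  by_cases hy3 : y = ext 3
  · simp [hy3, one_mul', mul_one']
  rw [mul_mid f hx0 hx3 hy0 hy3, mul_mid f hy0 hy3 hx0 hx3]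
  by_cases h : le x (inv f y)
  · rw [if_pos h, if_pos ((flip f hanti hinv).mp h)]
  · rw [if_neg h, if_neg (fun h' => h ((flip f hanti hinv).mp h'))]

lemma mul_ne3 (f : P → P) {x y : EP P} (hx3 : x ≠ ext 3) (hy3 : y ≠ ext 3) :
    mul f x y ≠ ext 3 := by
  by_cases hx0 : x = ext 0
  · simpa [hx0, mul_zero'] using (ne30 (P := P)).symm
  by_cases hy0 : y = ext 0
  · simpa [hy0, zero_mul'] using (ne30 (P := P)).symm
  rw [mul_mid f hx0 hx3 hy0 hy3]
  split_ifs <;> simp [Fin.ext_iff, v0, v1, v2, v3]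

lemma mul_mul_eq_zero (f : P → P) {x y z : EP P} (hx3 : x ≠ ext 3)
    (hy3 : y ≠ ext 3) (hz3 : z ≠ ext 3) :
    mul f (mul f x y) z = ext 0 := by
  by_cases hx0 : x = ext 0
  · simp [hx0, mul_zero']
  by_cases hy0 : y = ext 0
  · simp [hy0, zero_mul', mul_zero']
  by_cases hz0 : z = ext 0
  · simp [hz0, zero_mul']
  rw [mul_mid f hx0 hx3 hy0 hy3]
  split_ifs with h
  · exact mul_zero' f z
  · have h10 : (ext 1 : EP P) ≠ ext 0 := by simp [Fin.ext_iff, v0, v1, v2, v3]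
    have h13 : (ext 1 : EP P) ≠ ext 3 := by simp [Fin.ext_iff, v0, v1, v2, v3]
    rw [mul_mid f h10 h13 hz0 hz3, if_pos (le1_inv f hz3)]

end EP

/-- The extension E(P) of a poset with antitone involution is a residuated
poset satisfying x → 0 = x' for all x ∈ E(P). -/
theorem stmt6 {P : Type*} [PartialOrder P] (f : P → P)
    (hanti : ∀ x y : P, x ≤ y → f y ≤ f x) (hinv : ∀ x : P, f (f x) = x) :
    (∀ x : EP P, x ≤ EP.ext 3) ∧
    (∀ x y : EP P, EP.mul f x y = EP.mul f y x) ∧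
    (∀ x y z : EP P, EP.mul f (EP.mul f x y) z = EP.mul f x (EP.mul f y z)) ∧
    (∀ x : EP P, EP.mul f x (EP.ext 3) = x) ∧
    (∀ x y z : EP P, EP.mul f x y ≤ z ↔ x ≤ EP.imp f y z) ∧
    (∀ x : EP P, EP.imp f x (EP.ext 0) = EP.inv f x) := by
  have ne30 : (EP.ext 3 : EP P) ≠ EP.ext 0 := EP.ne30
  refine ⟨EP.le_top', EP.mul_comm' f hanti hinv, ?_, EP.mul_one' f, ?_, ?_⟩
  · intro x y z
    by_cases hx3 : x = EP.ext 3
    · simp [hx3, EP.one_mul']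
    by_cases hy3 : y = EP.ext 3
    · simp [hy3, EP.one_mul', EP.mul_one']
    by_cases hz3 : z = EP.ext 3
    · simp [hz3, EP.mul_one']
    rw [EP.mul_mul_eq_zero f hx3 hy3 hz3,
      EP.mul_comm' f hanti hinv x (EP.mul f y z),
      EP.mul_mul_eq_zero f hy3 hz3 hx3]
  · intro x y z
    by_cases hy0 : y = EP.ext 0
    · simp [hy0, EP.zero_mul', EP.imp, EP.bot_le', EP.le_top']
    by_cases hz3 : z = EP.ext 3
    · simp [hz3, EP.imp, EP.le_top']
    by_cases hx0 : x = EP.ext 0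
    · simp [hx0, EP.mul_zero', EP.bot_le']
    by_cases hy3 : y = EP.ext 3
    · subst hy3
      rw [EP.mul_one']
      by_cases hz0 : z = EP.ext 0
      · subst hz0
        have hi : EP.inv f (EP.ext 3 : EP P) = EP.ext 0 := by
          show EP.ext _ = _
          congr 1
        have : EP.imp f (EP.ext 3) (EP.ext 0) = EP.ext 0 := by
          simp [EP.imp, ne30, ne30.symm, hi]
        rw [this]
      · have : EP.imp f (EP.ext 3) z = z := by simp [EP.imp, ne30, hz0, hz3]
        rw [this]
    by_cases hz0 : z = EP.ext 0
    · subst hz0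
      have himp : EP.imp f y (EP.ext 0) = EP.inv f y := by
        simp [EP.imp, hy0, ne30.symm]
      rw [himp, EP.le_bot_iff']
      by_cases hx3 : x = EP.ext 3
      · subst hx3
        rw [EP.one_mul']
        simp only [hy0, false_iff]
        exact fun h => EP.not_le3_inv f hy0 hy3 (EP.le_def.mp h)
      · rw [EP.mul_mid f hx0 hx3 hy0 hy3]
        split_ifs with h
        · simpa [EP.le_def] using h
        · constructor
          · intro h'; exact absurd h' (by simp [Fin.ext_iff, EP.v0, EP.v1, EP.v2, EP.v3])
          · intro h'; exact absurd (EP.le_def.mp h') h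
    · have himp : EP.imp f y z = if EP.le y z then EP.ext 3 else EP.ext 2 := by
        simp [EP.imp, hy0, hy3, hz0, hz3]
      rw [himp]
      by_cases hx3 : x = EP.ext 3
      · subst hx3
        rw [EP.one_mul']
        split_ifs with h
        · simpa [EP.le_def] using h
        · simp only [EP.le_def] at *
          constructor
          · intro h'; exact absurd h' h
          · intro h'; exact absurd h' (by simp only [EP.le, Fin.le_def, EP.v2, EP.v3]; omega)
      · rw [EP.mul_mid f hx0 hx3 hy0 hy3]
        have lhs : (if EP.le x (EP.inv f y) then (EP.ext 0 : EP P) else EP.ext 1) ≤ z := by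
          split_ifs
          · exact EP.bot_le' z
          · exact EP.ext1_le hz0
        have rhs : x ≤ (if EP.le y z then (EP.ext 3 : EP P) else EP.ext 2) := by
          split_ifs
          · exact EP.le_top' x
          · exact EP.le_ext2 hx3
        simp [lhs, rhs]
  · intro x
    by_cases hx0 : x = EP.ext 0
    · subst hx0
      simp [EP.imp, EP.inv, Fin.ext_iff]
    · simp [EP.imp, hx0, ne30.symm]
end

section
/- On the extension E(P) of a poset with antitone involution (four-element-chain construction), a → b = 1 if and only if a ≤ b, for all a, b ∈ E(P). -/
attribute [local instance] Classical.propDecidable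

namespace EP

theorem inv_eq_ext_three_iff {P : Type*} (f : P → P) {a : EP P} : inv f a = ext 3 ↔ a = ext 0 := by
  cases a with
  | base x => simp [inv]
  | ext i => simp only [inv, ext.injEq, Fin.ext_iff]; omega

variable {P : Type*} [PartialOrder P]

theorem ext_le_ext {i j : Fin 4} : (ext i : EP P) ≤ ext j ↔ i ≤ j := Iff.rfl

theorem ext_zero_le (a : EP P) : ext 0 ≤ a := by
  cases a with
  | base x => show (0 : Fin 4).val ≤ 1; decide
  | ext i => exact ext_le_ext.2 i.zero_le

theorem le_ext_three (a : EP P) : a ≤ ext 3 := by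
  cases a with
  | base x => show 2 ≤ (3 : Fin 4).val; decide
  | ext i => exact ext_le_ext.2 (Fin.le_last i)

theorem le_ext_zero_iff {a : EP P} : a ≤ ext 0 ↔ a = ext 0 :=
  ⟨fun h => le_antisymm h (ext_zero_le a), fun h => h ▸ le_rfl⟩

theorem ext_three_le_iff {a : EP P} : ext 3 ≤ a ↔ a = ext 3 :=
  ⟨fun h => le_antisymm (le_ext_three a) h, fun h => h ▸ le_rfl⟩

end EP

theorem stmt9_general {P : Type*} [PartialOrder P] (f : P → P) :
    ∀ a b : EP P, EP.imp f a b = EP.ext 3 ↔ a ≤ b := by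
  intro a b
  unfold EP.imp
  split_ifs with hbound hb0 ha3 hle
  · rcases hbound with rfl | rfl
    · exact iff_of_true rfl (EP.ext_zero_le b)
    · exact iff_of_true rfl (EP.le_ext_three a)
  · rw [EP.inv_eq_ext_three_iff, hb0, EP.le_ext_zero_iff]
  · rw [ha3, EP.ext_three_le_iff]
  · exact iff_of_true rfl hle
  · exact iff_of_false (by simp) hle

/-- On E(P), a → b = 1 if and only if a ≤ b. -/
theorem stmt9 {P : Type*} [PartialOrder P] (f : P → P)
    (hanti : ∀ x y : P, x ≤ y → f y ≤ f x) (hinv : ∀ x : P, f (f x) = x) :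
    ∀ a b : EP P, EP.imp f a b = EP.ext 3 ↔ a ≤ b :=
  stmt9_general f
end

section
/- If (P, ≤, ') is a lattice with an antitone involution, then its extension E(P) by the four-element-chain construction is a residuated lattice (i.e., the underlying poset of the residuated poset E(P) is a lattice). -/
attribute [local instance] Classical.propDecidable

open EP in
theorem EP.le_def' {P : Type*} [PartialOrder P] (x y : EP P) : x ≤ y ↔ EP.le x y :=
  Iff.rfl

open EP in
/-- Auxiliary: a lattice structure on E(P) extending the partial order. -/
noncomputable def EPLattice {P : Type*} [Lattice P] : Lattice (EP P) where
  __ := (inferInstance : PartialOrder (EP P))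
  sup a b := match a, b with
    | base x, base y => base (x ⊔ y)
    | base x, ext i => if i.val ≤ 1 then base x else ext i
    | ext i, base y => if i.val ≤ 1 then base y else ext i
    | ext i, ext j => if i.val ≤ j.val then ext j else ext i
  inf a b := match a, b with
    | base x, base y => base (x ⊓ y)
    | base x, ext i => if i.val ≤ 1 then ext i else base x
    | ext i, base y => if i.val ≤ 1 then ext i else base y
    | ext i, ext j => if i.val ≤ j.val then ext i else ext j
  le_sup_left a b := by
    cases a <;> cases b <;> dsimp only <;> (try split_ifs) <;>
      simp only [EP.le_def', le, Fin.le_def] at * <;>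
      first | omega | exact le_refl _ | exact le_sup_left
  le_sup_right a b := by
    cases a <;> cases b <;> dsimp only <;> (try split_ifs) <;>
      simp only [EP.le_def', le, Fin.le_def] at * <;>
      first | omega | exact le_refl _ | exact le_sup_right
  sup_le a b c h1 h2 := by
    cases a <;> cases b <;> cases c <;> dsimp only <;> (try split_ifs) <;>
      simp only [EP.le_def', le, Fin.le_def] at * <;>
      first | omega | exact sup_le h1 h2 | assumption
  inf_le_left a b := by
    cases a <;> cases b <;> dsimp only <;> (try split_ifs) <;>
      simp only [EP.le_def', le, Fin.le_def] at * <;>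
      first | omega | exact le_refl _ | exact inf_le_left
  inf_le_right a b := by
    cases a <;> cases b <;> dsimp only <;> (try split_ifs) <;>
      simp only [EP.le_def', le, Fin.le_def] at * <;>
      first | omega | exact le_refl _ | exact inf_le_right
  le_inf a b c h1 h2 := by
    cases a <;> cases b <;> cases c <;> dsimp only <;> (try split_ifs) <;>
      simp only [EP.le_def', le, Fin.le_def] at * <;>
      first | omega | exact le_inf h1 h2 | assumption

/-- If P is a lattice with antitone involution, then its extension E(P)
(which is a residuated poset by the four-element-chain construction) is a
lattice: every pair of elements has a least upper bound and a greatest lower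
bound. -/
theorem stmt10 {P : Type*} [Lattice P] (f : P → P)
    (hanti : ∀ x y : P, x ≤ y → f y ≤ f x) (hinv : ∀ x : P, f (f x) = x) :
    ∀ a b : EP P, (∃ s, IsLUB {a, b} s) ∧ (∃ i, IsGLB {a, b} i) := by
  letI : Lattice (EP P) := EPLattice
  exact fun a b => ⟨⟨a ⊔ b, isLUB_pair⟩, ⟨a ⊓ b, isGLB_pair⟩⟩
end

section
/- Let C = {c₁, ..., cₙ} be a chain 0 = c₁ < c₂ < ... < cₙ = 1 with n ≥ 3. Define: 0 ⊙ cᵢ = cᵢ ⊙ 0 = 0, 1 ⊙ cᵢ = cᵢ ⊙ 1 = cᵢ, 0 → cᵢ = cᵢ → 1 = 1, cᵢ → 0 = cₙ₊₁₋ᵢ, 1 → cᵢ = cᵢ, and for 2 ≤ i, j ≤ n−1: cᵢ ⊙ cⱼ = 0 if i + j ≤ n + 1 else c₂, and cᵢ → cⱼ = 1 if i ≤ j else cₙ₋₁. Then (C, ≤, ⊙, →, 1) is a residuated lattice in which x' := x → 0 is an antitone involution. -/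
/-- The monoid operation on the chain 0 = c₁ < ... < cₙ = 1 (here realized as
`Fin n`, with cᵢ corresponding to index i - 1): 0 ⊙ x = x ⊙ 0 = 0,
1 ⊙ x = x ⊙ 1 = x, and for 2 ≤ i, j ≤ n - 1, cᵢ ⊙ cⱼ = 0 if i + j ≤ n + 1,
else c₂. -/
def cmul {n : ℕ} (hn : 3 ≤ n) (a b : Fin n) : Fin n :=
  if a.val = 0 ∨ b.val = 0 then ⟨0, by omega⟩
  else if a.val = n - 1 then b
  else if b.val = n - 1 then a
  else if (a.val + 1) + (b.val + 1) ≤ n + 1 then ⟨0, by omega⟩ else ⟨1, by omega⟩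

/-- The residuum on the chain: 0 → x = x → 1 = 1, cᵢ → 0 = cₙ₊₁₋ᵢ, 1 → x = x,
and for 2 ≤ i, j ≤ n - 1, cᵢ → cⱼ = 1 if i ≤ j, else cₙ₋₁. -/
def cimp {n : ℕ} (hn : 3 ≤ n) (a b : Fin n) : Fin n :=
  if a.val = 0 ∨ b.val = n - 1 then ⟨n - 1, by omega⟩
  else if b.val = 0 then ⟨n - 1 - a.val, by omega⟩
  else if a.val = n - 1 then b
  else if a.val ≤ b.val then ⟨n - 1, by omega⟩ else ⟨n - 2, by omega⟩

/-! Each operation is a case distinction on whether its arguments are the bottom, the top,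
or strictly inside the chain, so each axiom is a finite check in index arithmetic. Once the
bottom and the top are disposed of, associativity reduces to the fact that any product of
three interior elements is `0`. The negation `x → 0` sends `cᵢ` to `cₙ₊₁₋ᵢ`: it is the order
reversal `Fin.rev`, hence an antitone involution. -/

namespace ChainResiduatedLattice

variable {n : ℕ} (hn : 3 ≤ n)

theorem eq_bot_or_eq_top_or_interior (x : Fin n) :
    x = ⟨0, by omega⟩ ∨ x = ⟨n - 1, by omega⟩ ∨ (x.val ≠ 0 ∧ x.val ≠ n - 1) := by
  simp only [Fin.ext_iff]
  omega

theorem cmul_comm (x y : Fin n) : cmul hn x y = cmul hn y x := by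
  simp only [cmul, Fin.ext_iff]
  split_ifs <;> omega

theorem cmul_bot_left (x : Fin n) : cmul hn ⟨0, by omega⟩ x = ⟨0, by omega⟩ := by
  simp [cmul]

theorem cmul_bot_right (x : Fin n) : cmul hn x ⟨0, by omega⟩ = ⟨0, by omega⟩ := by
  simp [cmul]

theorem cmul_top_left (x : Fin n) : cmul hn ⟨n - 1, by omega⟩ x = x := by
  simp only [cmul, Fin.ext_iff]
  split_ifs <;> simp only at *; omega

theorem cmul_top (x : Fin n) : cmul hn x ⟨n - 1, by omega⟩ = x := by
  rw [cmul_comm, cmul_top_left]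

/-- Interior elements multiply into `{c₁, c₂}`, and `c₂ ⊙ cⱼ = c₁` for every interior `cⱼ`. -/
theorem cmul_cmul_eq_bot_of_interior {x y z : Fin n} (hx : x.val ≠ 0 ∧ x.val ≠ n - 1)
    (hy : y.val ≠ 0 ∧ y.val ≠ n - 1) (hz : z.val ≠ 0 ∧ z.val ≠ n - 1) :
    cmul hn (cmul hn x y) z = ⟨0, by omega⟩ := by
  simp only [cmul, Fin.ext_iff]
  split_ifs <;> simp -failIfUnchanged only [false_or] at * <;> omega

theorem cmul_assoc (x y z : Fin n) :
    cmul hn (cmul hn x y) z = cmul hn x (cmul hn y z) := by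
  rcases eq_bot_or_eq_top_or_interior hn x with rfl | rfl | hx <;>
    rcases eq_bot_or_eq_top_or_interior hn y with rfl | rfl | hy <;>
    rcases eq_bot_or_eq_top_or_interior hn z with rfl | rfl | hz <;>
    simp -failIfUnchanged only [cmul_bot_left, cmul_bot_right, cmul_top_left, cmul_top]
  rw [cmul_cmul_eq_bot_of_interior hn hx hy hz, cmul_comm hn x,
    cmul_cmul_eq_bot_of_interior hn hy hz hx]

theorem cmul_le_iff_le_cimp (x y z : Fin n) : cmul hn x y ≤ z ↔ x ≤ cimp hn y z := by
  simp only [cmul, cimp, Fin.le_def]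
  split_ifs <;> simp -failIfUnchanged only at * <;> omega

theorem cimp_bot_eq_rev (x : Fin n) : cimp hn x ⟨0, by omega⟩ = x.rev := by
  simp only [cimp, Fin.ext_iff, Fin.val_rev]
  split_ifs <;> simp -failIfUnchanged only at * <;> omega

end ChainResiduatedLattice

open ChainResiduatedLattice in
/-- The chain with n ≥ 3 elements and the above operations is a residuated
lattice in which x' := x → 0 is an antitone involution. -/
theorem stmt11 {n : ℕ} (hn : 3 ≤ n) :
    (∀ x : Fin n, x ≤ ⟨n - 1, by omega⟩) ∧
    (∀ x y : Fin n, cmul hn x y = cmul hn y x) ∧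
    (∀ x y z : Fin n, cmul hn (cmul hn x y) z = cmul hn x (cmul hn y z)) ∧
    (∀ x : Fin n, cmul hn x ⟨n - 1, by omega⟩ = x) ∧
    (∀ x y z : Fin n, cmul hn x y ≤ z ↔ x ≤ cimp hn y z) ∧
    (∀ x : Fin n, cimp hn (cimp hn x ⟨0, by omega⟩) ⟨0, by omega⟩ = x) ∧
    (∀ x y : Fin n, x ≤ y → cimp hn y ⟨0, by omega⟩ ≤ cimp hn x ⟨0, by omega⟩) := by
  refine ⟨fun x => Fin.le_def.mpr (Nat.le_pred_of_lt x.isLt), cmul_comm hn, cmul_assoc hn,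
    cmul_top hn, cmul_le_iff_le_cimp hn, fun x => ?_, fun x y hxy => ?_⟩
  · rw [cimp_bot_eq_rev, cimp_bot_eq_rev, Fin.rev_rev]
  · rw [cimp_bot_eq_rev, cimp_bot_eq_rev]
    exact Fin.rev_le_rev.mpr hxy
end

section
/- If a lattice L with antitone involution satisfies x ∧ x' ≤ y ∨ y' for all x, y, then its extension E(L) by the four-element-chain construction also satisfies x ∧ x' ≤ y ∨ y' for all x, y ∈ E(L). -/
attribute [local instance] Classical.propDecidable

section Aux
variable {L : Type*} [Lattice L]

lemma ep_isGLB_base (a b : L) :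
    IsGLB {EP.base a, EP.base b} (EP.base (a ⊓ b)) := by
  constructor
  · rintro z (rfl | rfl)
    · show a ⊓ b ≤ a; exact inf_le_left
    · show a ⊓ b ≤ b; exact inf_le_right
  · intro z hz
    have h1 : z ≤ EP.base a := hz (Set.mem_insert _ _)
    have h2 : z ≤ EP.base b := hz (Set.mem_insert_of_mem _ rfl)
    cases z with
    | base c => show c ≤ a ⊓ b; exact le_inf h1 h2
    | ext i => exact h1

lemma ep_isLUB_base (a b : L) :
    IsLUB {EP.base a, EP.base b} (EP.base (a ⊔ b)) := by
  constructor
  · rintro z (rfl | rfl)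
    · show a ≤ a ⊔ b; exact le_sup_left
    · show b ≤ a ⊔ b; exact le_sup_right
  · intro z hz
    have h1 : EP.base a ≤ z := hz (Set.mem_insert _ _)
    have h2 : EP.base b ≤ z := hz (Set.mem_insert_of_mem _ rfl)
    cases z with
    | base c => show a ⊔ b ≤ c; exact sup_le h1 h2
    | ext i => exact h1

lemma ep_isGLB_ext (i j : Fin 4) (h : i.val ≤ 1 ∨ j.val ≤ 1) :
    IsGLB {EP.ext i, EP.ext j} (EP.ext ⟨min i.val j.val, by omega⟩ : EP L) := by
  constructor
  · rintro z (rfl | rfl)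
    · show min i.val j.val ≤ i.val; omega
    · show min i.val j.val ≤ j.val; omega
  · intro z hz
    have h1 : z ≤ EP.ext i := hz (Set.mem_insert _ _)
    have h2 : z ≤ EP.ext j := hz (Set.mem_insert_of_mem _ rfl)
    cases z with
    | base c =>
      exfalso
      have h1' : 2 ≤ i.val := h1
      have h2' : 2 ≤ j.val := h2
      omega
    | ext k =>
      have h1' : k.val ≤ i.val := h1
      have h2' : k.val ≤ j.val := h2
      show k.val ≤ min i.val j.val
      omega

lemma ep_isLUB_ext (i j : Fin 4) (h : 2 ≤ i.val ∨ 2 ≤ j.val) :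
    IsLUB {EP.ext i, EP.ext j} (EP.ext ⟨max i.val j.val, by omega⟩ : EP L) := by
  constructor
  · rintro z (rfl | rfl)
    · show i.val ≤ max i.val j.val; omega
    · show j.val ≤ max i.val j.val; omega
  · intro z hz
    have h1 : EP.ext i ≤ z := hz (Set.mem_insert _ _)
    have h2 : EP.ext j ≤ z := hz (Set.mem_insert_of_mem _ rfl)
    cases z with
    | base c =>
      exfalso
      have h1' : i.val ≤ 1 := h1
      have h2' : j.val ≤ 1 := h2
      omega
    | ext k =>
      have h1' : i.val ≤ k.val := h1
      have h2' : j.val ≤ k.val := h2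
      show max i.val j.val ≤ k.val
      omega

end Aux

/-- If a lattice L with antitone involution ' satisfies the Kleene condition
x ∧ x' ≤ y ∨ y', then so does its extension E(L) (where infima and suprema in
E(L) are expressed via `IsGLB` and `IsLUB`). -/
theorem stmt12 {L : Type*} [Lattice L] (f : L → L)
    (hanti : ∀ x y : L, x ≤ y → f y ≤ f x) (hinv : ∀ x : L, f (f x) = x)
    (hkleene : ∀ x y : L, x ⊓ f x ≤ y ⊔ f y) :
    ∀ (x y : EP L) (m j : EP L),
      IsGLB {x, EP.inv f x} m → IsLUB {y, EP.inv f y} j → m ≤ j := by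
  intro x y m j hm hj
  cases x with
  | base a =>
    have hm' : m = EP.base (a ⊓ f a) := hm.unique (ep_isGLB_base a (f a))
    subst hm'
    cases y with
    | base b =>
      have hj' : j = EP.base (b ⊔ f b) := hj.unique (ep_isLUB_base b (f b))
      subst hj'
      show a ⊓ f a ≤ b ⊔ f b
      exact hkleene a b
    | ext k =>
      have hj' : j = EP.ext ⟨max k.val (3 - k.val), by omega⟩ :=
        hj.unique (ep_isLUB_ext k ⟨3 - k.val, by omega⟩ (by dsimp; omega))
      subst hj'
      show 2 ≤ max k.val (3 - k.val)
      omega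
  | ext i =>
    have hm' : m = EP.ext ⟨min i.val (3 - i.val), by omega⟩ :=
      hm.unique (ep_isGLB_ext i ⟨3 - i.val, by omega⟩ (by dsimp; omega))
    subst hm'
    cases y with
    | base b =>
      have hj' : j = EP.base (b ⊔ f b) := hj.unique (ep_isLUB_base b (f b))
      subst hj'
      show min i.val (3 - i.val) ≤ 1
      omega
    | ext k =>
      have hj' : j = EP.ext ⟨max k.val (3 - k.val), by omega⟩ :=
        hj.unique (ep_isLUB_ext k ⟨3 - k.val, by omega⟩ (by dsimp; omega))
      subst hj'
      show min i.val (3 - i.val) ≤ max k.val (3 - k.val)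
      omega
end

section
/- In the Boolean-algebra extension Q = B ∪ {c₁,...,c₂ₙ} (with cᵢ ⊙ cⱼ = 0 if i + j ≤ 2n + 1 and cᵢ ⊙ cⱼ = c_{min(i,j)} otherwise), the restriction of ⊙ to the chain {c₁,...,c₂ₙ} is associative: for all i, j, k, (cᵢ ⊙ cⱼ) ⊙ cₖ = cᵢ ⊙ (cⱼ ⊙ cₖ). -/
/-- The product on the chain c₁ < ... < c₂ₙ, described on subscripts:
cᵢ ⊙ cⱼ = c₁ (= 0) if i + j ≤ 2n + 1, and c_{min(i,j)} otherwise. -/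
def cdot (n i j : ℕ) : ℕ :=
  if i + j ≤ 2 * n + 1 then 1 else min i j

/-- The restriction of ⊙ to the chain {c₁, ..., c₂ₙ} is associative. -/
theorem stmt16 (n : ℕ) (hn : 1 ≤ n) :
    ∀ i j k : ℕ, 1 ≤ i → i ≤ 2 * n → 1 ≤ j → j ≤ 2 * n → 1 ≤ k → k ≤ 2 * n →
      cdot n (cdot n i j) k = cdot n i (cdot n j k) := by
  intro i j k hi hi2 hj hj2 hk hk2
  unfold cdot
  rcases le_or_gt i j with h1 | h1 <;> rcases le_or_gt j k with h2 | h2 <;>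
    rcases le_or_gt i k with h3 | h3 <;>
    simp only [min_def] <;> split_ifs <;> omega
end
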